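/- arXiv:2004.14954 — 3 statements merged into one kernel-verified Lean document; each statement's English description precedes it below -/
import Mathlib

section
/- For any positive integers N and L, there exists a fully connected ReLU network φ× ∈ F_{2,1}(L+1, 9N) such that (1) |φ×(x,y) − xy| ≤ 12 N^{−L} for all x,y ∈ [0,1], and (2) |φ×(x,y)| ≤ 1 for all x,y ∈ [0,1]. -/
open Finset

/-- Iterated hidden layers of a fully connected ReLU network of width `W`:
starting from `x0`, apply `k` further affine-plus-shifted-ReLU layers
(`A k` is the weight matrix `A_{k+2}` and `v (k+1)` the shift vector `v_{k+2}`). -/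
noncomputable def hiddenIter (W : ℕ) (A : ℕ → Matrix (Fin W) (Fin W) ℝ)
    (v : ℕ → Fin W → ℝ) (x0 : Fin W → ℝ) : ℕ → Fin W → ℝ
  | 0 => x0
  | k + 1 => fun i => max (((A k).mulVec (hiddenIter W A v x0 k)) i - v (k + 1) i) 0

/-- The class `F_{d,q}(L,W)` of fully connected ReLU networks with depth `L`
(number of hidden layers), width `W`, input dimension `d`, output dimension `q`:
`f(z) = v_{L+1} + A_{L+1} σ_{v_L}(A_L σ_{v_{L−1}}(⋯ A_2 σ_{v_1}(A_1 z)⋯))`. -/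
noncomputable def NNclass (d q L W : ℕ) : Set ((Fin d → ℝ) → (Fin q → ℝ)) :=
  {f | ∃ (A₁ : Matrix (Fin W) (Fin d) ℝ) (A : ℕ → Matrix (Fin W) (Fin W) ℝ)
      (v : ℕ → Fin W → ℝ) (Aout : Matrix (Fin q) (Fin W) ℝ) (vout : Fin q → ℝ),
      ∀ z, f z = vout + Aout.mulVec
        (hiddenIter W A v (fun i => max ((A₁.mulVec z) i - v 0 i) 0) (L - 1))}

/-- The class `F_{d,1}(L,W)` of scalar-valued fully connected ReLU networks. -/
noncomputable def NNscalar (d L W : ℕ) : Set ((Fin d → ℝ) → ℝ) :=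
  {f | ∃ g ∈ NNclass d 1 L W, ∀ z, f z = g z 0}

/-!
Yarotsky's construction. Let `g` be the sawtooth map of `[0, 1]` with `M` teeth and
`h t = t * (1 - t)`. The piecewise linear interpolation `Q` of `h` at the nodes `k / M` satisfies
`Q = h - h ∘ g / M ^ 2`, so `U s = t - ∑_{r < s} M ^ (-2r) Q (g^[r] t)` telescopes to
`t ^ 2 + M ^ (-2s) h (g^[s] t)`, which lies within `M ^ (-2s) / 4` of `t ^ 2`. A hidden layer maps
`(g^[r] t, U r)` to `(g^[r+1] t, U (r+1))` through `M` hinge neurons on `g^[r] t` and one neuron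
carrying `U r ≥ 0`; three such blocks, run on `x`, `y` and `(x + y) / 2`, give `x * y` by
polarization. With `M = N` the width is `3 (N + 1) ≤ 9 N` and the error `M ^ (-2(L+1)) / 2`.
-/

open Matrix Function

section Sawtooth

variable {M : ℕ}

lemma exists_eq_add_div (hM : 0 < M) {t : ℝ} (ht : t ∈ Set.Icc 0 1) :
    ∃ j < M, ∃ r : ℝ, 0 ≤ r ∧ r ≤ 1 ∧ t = (j + r) / M := by
  obtain ⟨ht₀, ht₁⟩ := ht
  have hM' : (0 : ℝ) < M := by exact_mod_cast hM
  set j := min ⌊M * t⌋₊ (M - 1)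
  have hj : (j : ℝ) ≤ M * t :=
    (Nat.cast_le.mpr (min_le_left _ _)).trans (Nat.floor_le (by positivity))
  refine ⟨j, by omega, M * t - j, by linarith, ?_, by field_simp; ring⟩
  rcases le_total ⌊M * t⌋₊ (M - 1) with h | h
  · rw [show j = ⌊M * t⌋₊ from min_eq_left h]
    linarith [Nat.lt_floor_add_one (M * t)]
  · rw [show j = M - 1 from min_eq_right h, Nat.cast_sub hM, Nat.cast_one]
    nlinarith

lemma sum_mul_max_sub_div_eq {j : ℕ} (hj : j < M) {r : ℝ} (hr₀ : 0 ≤ r) (hr₁ : r ≤ 1)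
    (w : ℕ → ℝ) :
    ∑ k ∈ range M, w k * max ((j + r) / M - k / M) 0
      = (∑ k ∈ range (j + 1), w k * (j + r - k)) / M := by
  have hM : (0 : ℝ) < M := by exact_mod_cast (Nat.zero_le j).trans_lt hj
  rw [← sum_range_add_sum_Ico _ (Nat.succ_le_of_lt hj), sum_div]
  have hinactive : ∑ k ∈ Ico (j + 1) M, w k * max ((j + r) / M - k / M) 0 = 0 := by
    refine sum_eq_zero fun k hk => ?_
    have hk : (j : ℝ) + 1 ≤ k := by exact_mod_cast (mem_Ico.mp hk).1
    rw [max_eq_right, mul_zero]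
    rw [div_sub_div_same]
    exact div_nonpos_of_nonpos_of_nonneg (by linarith) hM.le
  rw [hinactive, add_zero]
  refine sum_congr rfl fun k hk => ?_
  have hk : (k : ℝ) ≤ j := by exact_mod_cast Nat.lt_succ_iff.mp (mem_range.mp hk)
  rw [div_sub_div_same, max_eq_left (div_nonneg (by linarith) hM.le), mul_div_assoc]

def sawtoothCoeff (M k : ℕ) : ℝ := if k = 0 then M else 2 * M * (-1) ^ k

def chordCoeff (M k : ℕ) : ℝ := if k = 0 then M - 1 else -2

/-- The continuous piecewise linear map with `sawtooth M (k / M) = 0` for even `k` and `1` for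
odd `k`, `k = 0, …, M`. -/
noncomputable def sawtooth (M : ℕ) (t : ℝ) : ℝ :=
  ∑ k ∈ range M, sawtoothCoeff M k * max (t - k / M) 0

/-- The piecewise linear interpolation of `t * (1 - t)` at the nodes `k / M`. -/
noncomputable def chordInterp (M : ℕ) (t : ℝ) : ℝ :=
  ∑ k ∈ range M, chordCoeff M k / M * max (t - k / M) 0

lemma sum_sawtoothCoeff_mul (j : ℕ) (r : ℝ) :
    ∑ k ∈ range (j + 1), sawtoothCoeff M k * (j + r - k)
      = M * (1 / 2 + (-1) ^ j * (r - 1 / 2)) := by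
  induction j generalizing r with
  | zero => simp [sawtoothCoeff]
  | succ j ih =>
    rw [sum_range_succ]
    have hshift := ih (r + 1)
    push_cast at hshift ⊢
    simp only [add_right_comm _ (1 : ℝ) r, add_assoc] at hshift ⊢
    rw [hshift, sawtoothCoeff, if_neg j.succ_ne_zero]
    ring

lemma sum_chordCoeff_mul (j : ℕ) (r : ℝ) :
    ∑ k ∈ range (j + 1), chordCoeff M k * (j + r - k) = (j + r) * (M - j - r) - r * (1 - r) := by
  induction j generalizing r with
  | zero =>
    simp only [zero_add, range_one, sum_singleton, chordCoeff, if_pos, Nat.cast_zero, sub_zero]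
    ring
  | succ j ih =>
    rw [sum_range_succ]
    have hshift := ih (r + 1)
    push_cast at hshift ⊢
    simp only [add_right_comm _ (1 : ℝ) r, add_assoc] at hshift ⊢
    rw [hshift, chordCoeff, if_neg j.succ_ne_zero]
    ring

lemma sawtooth_add_div {j : ℕ} (hj : j < M) {r : ℝ} (hr₀ : 0 ≤ r) (hr₁ : r ≤ 1) :
    sawtooth M ((j + r) / M) = 1 / 2 + (-1) ^ j * (r - 1 / 2) := by
  have hM : (M : ℝ) ≠ 0 := by exact_mod_cast (Nat.zero_le j).trans_lt hj |>.ne'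
  rw [sawtooth, sum_mul_max_sub_div_eq hj hr₀ hr₁, sum_sawtoothCoeff_mul]
  field_simp

lemma chordInterp_add_div {j : ℕ} (hj : j < M) {r : ℝ} (hr₀ : 0 ≤ r) (hr₁ : r ≤ 1) :
    chordInterp M ((j + r) / M) = (j + r) / M * (1 - (j + r) / M) - r * (1 - r) / M ^ 2 := by
  have hM : (M : ℝ) ≠ 0 := by exact_mod_cast (Nat.zero_le j).trans_lt hj |>.ne'
  rw [chordInterp, sum_mul_max_sub_div_eq hj hr₀ hr₁]
  simp_rw [div_mul_eq_mul_div]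
  rw [← sum_div, sum_chordCoeff_mul]
  field_simp
  ring

variable {t : ℝ}

lemma sawtooth_add_div_mul_one_sub {j : ℕ} (hj : j < M) {r : ℝ} (hr₀ : 0 ≤ r) (hr₁ : r ≤ 1) :
    sawtooth M ((j + r) / M) * (1 - sawtooth M ((j + r) / M)) = r * (1 - r) := by
  rw [sawtooth_add_div hj hr₀ hr₁]
  rcases neg_one_pow_eq_or ℝ j with h | h <;> rw [h] <;> ring

lemma sawtooth_mapsTo (hM : 0 < M) : Set.MapsTo (sawtooth M) (Set.Icc 0 1) (Set.Icc 0 1) := by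
  intro t ht
  obtain ⟨j, hj, r, hr₀, hr₁, rfl⟩ := exists_eq_add_div hM ht
  rw [sawtooth_add_div hj hr₀ hr₁]
  rcases neg_one_pow_eq_or ℝ j with h | h <;> rw [h] <;> constructor <;> linarith

lemma sawtooth_mul_one_sub_le (hM : 0 < M) (ht : t ∈ Set.Icc 0 1) :
    sawtooth M t * (1 - sawtooth M t) ≤ M ^ 2 * (t * (1 - t)) := by
  obtain ⟨j, hj, r, hr₀, hr₁, rfl⟩ := exists_eq_add_div hM ht
  have hM' : (M : ℝ) ≠ 0 := by positivity
  have hjM : (j : ℝ) + 1 ≤ M := by exact_mod_cast hj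
  rw [sawtooth_add_div_mul_one_sub hj hr₀ hr₁]
  calc r * (1 - r) ≤ (j + r) * (M - (j + r)) :=
        mul_le_mul (by linarith [j.cast_nonneg (α := ℝ)]) (by linarith) (by linarith) (by linarith)
    _ = M ^ 2 * ((j + r) / M * (1 - (j + r) / M)) := by field_simp

lemma chordInterp_eq (hM : 0 < M) (ht : t ∈ Set.Icc 0 1) :
    chordInterp M t = t * (1 - t) - sawtooth M t * (1 - sawtooth M t) / M ^ 2 := by
  obtain ⟨j, hj, r, hr₀, hr₁, rfl⟩ := exists_eq_add_div hM ht
  rw [chordInterp_add_div hj hr₀ hr₁, sawtooth_add_div_mul_one_sub hj hr₀ hr₁]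

end Sawtooth

section SqApprox

variable {M : ℕ} {t : ℝ}

noncomputable def sqApprox (M : ℕ) (t : ℝ) : ℕ → ℝ
  | 0 => t
  | s + 1 => sqApprox M t s - ((M : ℝ) ^ (2 * s))⁻¹ * chordInterp M ((sawtooth M)^[s] t)

lemma sawtooth_iterate_mem_Icc (hM : 0 < M) (ht : t ∈ Set.Icc 0 1) (s : ℕ) :
    (sawtooth M)^[s] t ∈ Set.Icc 0 1 :=
  (sawtooth_mapsTo hM).iterate s ht

lemma sawtooth_iterate_mul_one_sub_le (hM : 0 < M) (ht : t ∈ Set.Icc 0 1) (s : ℕ) :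
    (sawtooth M)^[s] t * (1 - (sawtooth M)^[s] t) ≤ (M : ℝ) ^ (2 * s) * (t * (1 - t)) := by
  induction s with
  | zero => simp
  | succ s ih =>
    rw [iterate_succ_apply']
    calc _ ≤ (M : ℝ) ^ 2 * ((sawtooth M)^[s] t * (1 - (sawtooth M)^[s] t)) :=
          sawtooth_mul_one_sub_le hM (sawtooth_iterate_mem_Icc hM ht s)
      _ ≤ (M : ℝ) ^ 2 * ((M : ℝ) ^ (2 * s) * (t * (1 - t))) := by gcongr
      _ = (M : ℝ) ^ (2 * (s + 1)) * (t * (1 - t)) := by ring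

lemma sqApprox_eq (hM : 0 < M) (ht : t ∈ Set.Icc 0 1) (s : ℕ) :
    sqApprox M t s = t ^ 2 + ((M : ℝ) ^ (2 * s))⁻¹ *
      ((sawtooth M)^[s] t * (1 - (sawtooth M)^[s] t)) := by
  induction s with
  | zero =>
    simp only [sqApprox, mul_zero, pow_zero, inv_one, iterate_zero, id_eq, one_mul]
    ring
  | succ s ih =>
    have hM' : (M : ℝ) ≠ 0 := by positivity
    rw [sqApprox, ih, chordInterp_eq hM (sawtooth_iterate_mem_Icc hM ht s), iterate_succ_apply']
    field_simp
    ring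

lemma sq_le_sqApprox (hM : 0 < M) (ht : t ∈ Set.Icc 0 1) (s : ℕ) : t ^ 2 ≤ sqApprox M t s := by
  obtain ⟨hG₀, hG₁⟩ := sawtooth_iterate_mem_Icc hM ht s
  rw [sqApprox_eq hM ht]
  exact le_add_of_nonneg_right (mul_nonneg (by positivity) (mul_nonneg hG₀ (by linarith)))

lemma sqApprox_le_self (hM : 0 < M) (ht : t ∈ Set.Icc 0 1) (s : ℕ) : sqApprox M t s ≤ t := by
  have hMs : (0 : ℝ) < (M : ℝ) ^ (2 * s) := by positivity
  have hcorr : ((M : ℝ) ^ (2 * s))⁻¹ * ((sawtooth M)^[s] t * (1 - (sawtooth M)^[s] t))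
      ≤ t * (1 - t) := by
    rw [inv_mul_le_iff₀ hMs]
    exact sawtooth_iterate_mul_one_sub_le hM ht s
  rw [sqApprox_eq hM ht]
  linarith

lemma sqApprox_sub_sq_le (hM : 0 < M) (ht : t ∈ Set.Icc 0 1) (s : ℕ) :
    sqApprox M t s - t ^ 2 ≤ ((M : ℝ) ^ (2 * s))⁻¹ / 4 := by
  obtain ⟨hG₀, hG₁⟩ := sawtooth_iterate_mem_Icc hM ht s
  rw [sqApprox_eq hM ht, add_sub_cancel_left, div_eq_mul_one_div]
  gcongr
  nlinarith [sq_nonneg ((sawtooth M)^[s] t - 1 / 2)]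

end SqApprox

section ProductApprox

variable {M : ℕ} {x y : ℝ}

/-- Polarization: `x * y = 2 ((x + y) / 2) ^ 2 - x ^ 2 / 2 - y ^ 2 / 2`. -/
noncomputable def productApprox (M s : ℕ) (x y : ℝ) : ℝ :=
  2 * sqApprox M ((x + y) / 2) s - sqApprox M x s / 2 - sqApprox M y s / 2

lemma midpoint_mem_Icc (hx : x ∈ Set.Icc (0 : ℝ) 1) (hy : y ∈ Set.Icc (0 : ℝ) 1) :
    (x + y) / 2 ∈ Set.Icc (0 : ℝ) 1 :=
  ⟨by linarith [hx.1, hy.1], by linarith [hx.2, hy.2]⟩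

lemma abs_productApprox_sub_mul_le (hM : 0 < M) (hx : x ∈ Set.Icc 0 1) (hy : y ∈ Set.Icc 0 1)
    (s : ℕ) : |productApprox M s x y - x * y| ≤ ((M : ℝ) ^ (2 * s))⁻¹ / 2 := by
  have hz := midpoint_mem_Icc hx hy
  rw [productApprox, abs_le]
  constructor <;> nlinarith [sq_le_sqApprox hM hz s, sq_le_sqApprox hM hx s,
    sq_le_sqApprox hM hy s, sqApprox_sub_sq_le hM hz s, sqApprox_sub_sq_le hM hx s,
    sqApprox_sub_sq_le hM hy s, inv_nonneg.mpr (pow_nonneg (M.cast_nonneg (α := ℝ)) (2 * s))]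

lemma abs_productApprox_le_one (hM : 0 < M) (hx : x ∈ Set.Icc 0 1) (hy : y ∈ Set.Icc 0 1)
    (s : ℕ) : |productApprox M s x y| ≤ 1 := by
  have hz := midpoint_mem_Icc hx hy
  rw [productApprox, abs_le]
  constructor
  · nlinarith [sq_le_sqApprox hM hz s, sqApprox_le_self hM hx s, sqApprox_le_self hM hy s,
      sq_nonneg (x + y - 1)]
  · nlinarith [sqApprox_le_self hM hz s, sq_le_sqApprox hM hx s, sq_le_sqApprox hM hy s,
      sq_nonneg (x - 1), sq_nonneg (y - 1)]

end ProductApprox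

section Padding

variable {ι κ m n α : Type*}

/-- `hiddenIter` for neurons indexed by an arbitrary finite type: `hiddenIter W` is
`reluStack (ι := Fin W)`. -/
noncomputable def reluStack [Fintype ι] (A : ℕ → Matrix ι ι ℝ) (v : ℕ → ι → ℝ) (x₀ : ι → ℝ) :
    ℕ → ι → ℝ
  | 0 => x₀
  | k + 1 => fun i => max ((A k *ᵥ reluStack A v x₀ k) i - v (k + 1) i) 0

noncomputable def padRows [Zero α] (e : ι ↪ κ) (A : Matrix ι n α) : Matrix κ n α :=
  of fun i j => extend e (fun a => A a j) 0 i

noncomputable def padCols [Zero α] (e : ι ↪ κ) (A : Matrix m ι α) : Matrix m κ α :=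
  of fun i j => extend e (fun a => A i a) 0 j

lemma padRows_mulVec [NonUnitalNonAssocSemiring α] [Fintype n] (e : ι ↪ κ) (A : Matrix ι n α)
    (x : n → α) :
    padRows e A *ᵥ x = extend e (A *ᵥ x) 0 := by
  ext i
  by_cases hi : ∃ a, e a = i
  · obtain ⟨a, rfl⟩ := hi
    simp [mulVec, padRows, e.injective.extend_apply]
  · simp [mulVec, padRows, extend_apply' _ _ _ hi]

lemma padCols_mulVec_extend [NonUnitalNonAssocSemiring α] [Fintype ι] [Fintype κ] (e : ι ↪ κ)
    (A : Matrix m ι α) (x : ι → α) :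
    padCols e A *ᵥ extend e x 0 = A *ᵥ x := by
  ext i
  refine (Fintype.sum_of_injective e e.injective _ _ (fun j hj => ?_) fun a => ?_).symm
  · simp [padCols, extend_apply' _ _ _ hj]
  · simp [padCols, e.injective.extend_apply]

lemma max_extend_sub_extend (e : ι ↪ κ) (a b : ι → ℝ) :
    (fun i => max (extend e a 0 i - extend e b 0 i) 0)
      = extend e (fun j => max (a j - b j) 0) 0 := by
  ext i
  by_cases hi : ∃ j, e j = i
  · obtain ⟨j, rfl⟩ := hi
    simp [e.injective.extend_apply]
  · simp [extend_apply' _ _ _ hi]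

lemma hiddenIter_pad [Fintype ι] {W : ℕ} (e : ι ↪ Fin W) (A : ℕ → Matrix ι ι ℝ)
    (v : ℕ → ι → ℝ) (x₀ : ι → ℝ) (k : ℕ) :
    hiddenIter W (fun k => padRows e (padCols e (A k))) (fun k => extend e (v k) 0)
      (extend e x₀ 0) k = extend e (reluStack A v x₀ k) 0 := by
  induction k with
  | zero => rfl
  | succ k ih =>
    rw [hiddenIter, ih, padRows_mulVec, padCols_mulVec_extend, max_extend_sub_extend]
    rfl

/-- The neurons outside the range of `e` stay idle at `0`. -/
lemma mem_NNclass_of_embedding [Fintype ι] {d q L W : ℕ} (e : ι ↪ Fin W)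
    (A₁ : Matrix ι (Fin d) ℝ) (A : ℕ → Matrix ι ι ℝ) (v : ℕ → ι → ℝ)
    (Aout : Matrix (Fin q) ι ℝ) (vout : Fin q → ℝ) :
    (fun z => vout + Aout *ᵥ reluStack A v (fun i => max ((A₁ *ᵥ z) i - v 0 i) 0) (L - 1))
      ∈ NNclass d q L W := by
  refine ⟨padRows e A₁, fun k => padRows e (padCols e (A k)), fun k => extend e (v k) 0,
    padCols e Aout, vout, fun z => ?_⟩
  rw [padRows_mulVec, max_extend_sub_extend, hiddenIter_pad, padCols_mulVec_extend]

end Padding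

lemma Matrix.blockDiagonal_mulVec_apply {m n o α : Type*} [NonUnitalNonAssocSemiring α]
    [Fintype n] [Fintype o] [DecidableEq o] (B : o → Matrix m n α) (x : n × o → α) (i : m) (k : o) :
    (blockDiagonal B *ᵥ x) (i, k) = (B k *ᵥ fun j => x (j, k)) i := by
  simp [mulVec, dotProduct, Fintype.sum_prod_type, blockDiagonal_apply']

section Network

variable {M s : ℕ} {t : ℝ}

noncomputable def nodeShift (M : ℕ) (o : Option (Fin M)) : ℝ := o.elim 0 fun k => k / M

noncomputable def blockState (M s : ℕ) (t : ℝ) (o : Option (Fin M)) : ℝ :=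
  o.elim (sqApprox M t s) fun k => max ((sawtooth M)^[s] t - k / M) 0

noncomputable def sawtoothRow (M : ℕ) (o : Option (Fin M)) : ℝ :=
  o.elim 0 fun k => sawtoothCoeff M k

noncomputable def sqApproxRow (M s : ℕ) (o : Option (Fin M)) : ℝ :=
  o.elim 1 fun k => -((M : ℝ) ^ (2 * s))⁻¹ * (chordCoeff M k / M)

lemma sawtoothRow_dotProduct_blockState :
    sawtoothRow M ⬝ᵥ blockState M s t = (sawtooth M)^[s + 1] t := by
  rw [dotProduct, Fintype.sum_option, iterate_succ_apply', sawtooth,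
    ← Fin.sum_univ_eq_sum_range
      (fun k : ℕ => sawtoothCoeff M k * max ((sawtooth M)^[s] t - (k : ℝ) / M) 0)]
  simp [sawtoothRow, blockState]

lemma sqApproxRow_dotProduct_blockState :
    sqApproxRow M s ⬝ᵥ blockState M s t = sqApprox M t (s + 1) := by
  rw [dotProduct, Fintype.sum_option, sqApprox, chordInterp, mul_sum,
    ← Fin.sum_univ_eq_sum_range (fun k : ℕ =>
      ((M : ℝ) ^ (2 * s))⁻¹ * (chordCoeff M k / M * max ((sawtooth M)^[s] t - (k : ℝ) / M) 0))]
  simp [sqApproxRow, blockState, sub_eq_add_neg, mul_assoc]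

noncomputable def blockWeight (M s : ℕ) : Matrix (Option (Fin M)) (Option (Fin M)) ℝ :=
  of fun o => o.elim (sqApproxRow M s) fun _ => sawtoothRow M

lemma max_blockWeight_mulVec_sub_nodeShift (hM : 0 < M) (ht : t ∈ Set.Icc 0 1) :
    (fun o => max ((blockWeight M s *ᵥ blockState M s t) o - nodeShift M o) 0)
      = blockState M (s + 1) t := by
  ext (_ | k)
  · have h := (sq_nonneg t).trans (sq_le_sqApprox hM ht (s + 1))
    simp [mulVec, blockWeight, nodeShift, blockState, sqApproxRow_dotProduct_blockState, h]
  · simp [mulVec, blockWeight, nodeShift, blockState, sawtoothRow_dotProduct_blockState]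

end Network

section ProductNet

variable {M : ℕ} {x y : ℝ}

/-- Block `b` works on `t = ![x, y, (x + y) / 2] b`: after `s` layers the neuron `(some k, b)`
holds the hinge `max ((sawtooth M)^[s] t - k / M) 0` and `(none, b)` holds `sqApprox M t s`. -/
abbrev ProductNeuron (M : ℕ) := Option (Fin M) × Fin 3

noncomputable def polarizationInput : Matrix (Fin 3) (Fin 2) ℝ := !![1, 0; 0, 1; 1 / 2, 1 / 2]

noncomputable def polarizationOutput : Fin 3 → ℝ := ![-1 / 2, -1 / 2, 2]

noncomputable def productNetInput (M : ℕ) : Matrix (ProductNeuron M) (Fin 2) ℝ :=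
  of fun i => polarizationInput i.2

noncomputable def productNetHidden (M s : ℕ) : Matrix (ProductNeuron M) (ProductNeuron M) ℝ :=
  blockDiagonal fun _ => blockWeight M s

noncomputable def productNetShift (M : ℕ) (_ : ℕ) (i : ProductNeuron M) : ℝ := nodeShift M i.1

noncomputable def productNetOutput (M L : ℕ) : Matrix (Fin 1) (ProductNeuron M) ℝ :=
  of fun _ i => polarizationOutput i.2 * sqApproxRow M L i.1

noncomputable def productNet (M L : ℕ) (z : Fin 2 → ℝ) : Fin 1 → ℝ :=
  0 + productNetOutput M L *ᵥ reluStack (productNetHidden M) (productNetShift M)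
    (fun i => max ((productNetInput M *ᵥ z) i - productNetShift M 0 i) 0) L

lemma polarizationInput_mulVec : polarizationInput *ᵥ ![x, y] = ![x, y, (x + y) / 2] := by
  ext b
  fin_cases b <;> simp [polarizationInput, mulVec, dotProduct, Fin.sum_univ_two, mul_add,
    div_eq_inv_mul]

lemma polarizationInput_mulVec_mem_Icc (hx : x ∈ Set.Icc 0 1) (hy : y ∈ Set.Icc 0 1)
    (b : Fin 3) : (polarizationInput *ᵥ ![x, y]) b ∈ Set.Icc 0 1 := by
  rw [polarizationInput_mulVec]
  fin_cases b
  exacts [hx, hy, midpoint_mem_Icc hx hy]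

lemma reluStack_productNet (hM : 0 < M) (hx : x ∈ Set.Icc 0 1) (hy : y ∈ Set.Icc 0 1) (s : ℕ) :
    reluStack (productNetHidden M) (productNetShift M)
      (fun i => max ((productNetInput M *ᵥ ![x, y]) i - productNetShift M 0 i) 0) s
      = fun i => blockState M s ((polarizationInput *ᵥ ![x, y]) i.2) i.1 := by
  induction s with
  | zero =>
    ext ⟨_ | k, b⟩
    · show max (_ - 0) 0 = _
      rw [sub_zero]
      exact max_eq_left (polarizationInput_mulVec_mem_Icc hx hy b).1
    · rfl
  | succ s ih =>
    ext ⟨o, b⟩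
    rw [reluStack, ih]
    show max ((productNetHidden M s *ᵥ _) (o, b) - _) 0 = _
    rw [productNetHidden, blockDiagonal_mulVec_apply]
    exact congrFun (max_blockWeight_mulVec_sub_nodeShift hM
      (polarizationInput_mulVec_mem_Icc hx hy b)) o

lemma productNet_apply (hM : 0 < M) (hx : x ∈ Set.Icc 0 1) (hy : y ∈ Set.Icc 0 1) (L : ℕ) :
    productNet M L ![x, y] 0 = productApprox M (L + 1) x y := by
  have hblock (t : ℝ) (b : Fin 3) :
      ∑ o, productNetOutput M L 0 (o, b) * blockState M L t o
        = polarizationOutput b * sqApprox M t (L + 1) := by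
    rw [← sqApproxRow_dotProduct_blockState, dotProduct, mul_sum]
    simp only [productNetOutput, of_apply, mul_assoc]
  rw [productNet, reluStack_productNet hM hx hy, Pi.add_apply, Pi.zero_apply, zero_add, mulVec,
    dotProduct, Fintype.sum_prod_type_right]
  simp only [hblock, Fin.sum_univ_three, polarizationInput_mulVec, polarizationOutput,
    cons_val_zero, cons_val_one, Matrix.cons_val, productApprox]
  ring

lemma productNet_mem_NNclass {W : ℕ} (e : ProductNeuron M ↪ Fin W) (L : ℕ) :
    productNet M L ∈ NNclass 2 1 (L + 1) W :=
  mem_NNclass_of_embedding e _ _ _ _ _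

end ProductNet

theorem statement6_general (N L : ℕ) (hN : 0 < N) :
    ∃ φ ∈ NNscalar 2 (L + 1) (9 * N),
      (∀ x y : ℝ, x ∈ Set.Icc (0 : ℝ) 1 → y ∈ Set.Icc (0 : ℝ) 1 →
        |φ ![x, y] - x * y| ≤ 12 * ((N : ℝ) ^ L)⁻¹) ∧
      ∀ x y : ℝ, x ∈ Set.Icc (0 : ℝ) 1 → y ∈ Set.Icc (0 : ℝ) 1 → |φ ![x, y]| ≤ 1 := by
  obtain ⟨e⟩ : Nonempty (ProductNeuron N ↪ Fin (9 * N)) :=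
    Function.Embedding.nonempty_of_card_le (by
      simp only [Fintype.card_prod, Fintype.card_option, Fintype.card_fin]; omega)
  refine ⟨fun z => productNet N L z 0, ⟨_, productNet_mem_NNclass e L, fun _ => rfl⟩,
    fun x y hx hy => ?_, fun x y hx hy => ?_⟩
  · have hpow : (N : ℝ) ^ L ≤ (N : ℝ) ^ (2 * (L + 1)) :=
      pow_le_pow_right₀ (by exact_mod_cast hN) (by omega)
    calc |productNet N L ![x, y] 0 - x * y|
        ≤ ((N : ℝ) ^ (2 * (L + 1)))⁻¹ / 2 := by
          rw [productNet_apply hN hx hy]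
          exact abs_productApprox_sub_mul_le hN hx hy (L + 1)
      _ ≤ 12 * ((N : ℝ) ^ L)⁻¹ := by
          have := inv_anti₀ (by positivity) hpow
          linarith [inv_nonneg.mpr (pow_nonneg (N.cast_nonneg (α := ℝ)) L)]
  · simpa only [productNet_apply hN hx hy] using abs_productApprox_le_one hN hx hy (L + 1)

/-- For any positive integers `N, L` there is a ReLU network
`φ× ∈ F_{2,1}(L+1, 9N)` with `|φ×(x,y) − xy| ≤ 12N^{−L}` and `|φ×(x,y)| ≤ 1`
for all `x,y ∈ [0,1]`. -/
theorem statement6 (N L : ℕ) (hN : 0 < N) (hL : 0 < L) :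
    ∃ φ ∈ NNscalar 2 (L + 1) (9 * N),
      (∀ x y : ℝ, x ∈ Set.Icc (0 : ℝ) 1 → y ∈ Set.Icc (0 : ℝ) 1 →
        |φ ![x, y] - x * y| ≤ 12 * ((N : ℝ) ^ L)⁻¹) ∧
      ∀ x y : ℝ, x ∈ Set.Icc (0 : ℝ) 1 → y ∈ Set.Icc (0 : ℝ) 1 → |φ ![x, y]| ≤ 1 :=
  statement6_general N L hN
end

section
/- Given ε > 0, positive integers L, W, K, and δ > 0 with δ < 1/(3K), let f be continuous on [0,1]^d. Suppose there is a fully connected ReLU network g̃ ∈ F_{d,1}(L,W) such that |f(z) − g̃(z)| ≤ ε for all z ∈ [0,1]^d ∖ Ω(K,δ,d). Then there exists a network g ∈ F_{d,1}(L+2d, 3^d(W+3)) such that |f(z) − g(z)| ≤ ε + d·ω_f(δ) for all z ∈ [0,1]^d, where ω_f(δ) = sup{ |f(x)−f(y)| : ‖x−y‖₂ ≤ δ, x,y ∈ [0,1]^d } is the modulus of continuity of f. -/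
open Finset

/-- Euclidean norm on `ℝ^d` (represented as `Fin d → ℝ`). -/
noncomputable def enorm2 {d : ℕ} (z : Fin d → ℝ) : ℝ := Real.sqrt (∑ j, (z j) ^ 2)

/-- The largest integer strictly less than `x` (the paper's `⌊x⌋`, for `x > 0`);
the paper's `⌈x⌉` is then `sFloor x + 1 = ⌈x⌉₊` for `x > 0`. -/
noncomputable def sFloor (x : ℝ) : ℕ := ⌈x⌉₊ - 1

/-- Partial derivative of `f : ℝ^d → ℝ` in the `j`-th coordinate direction. -/
noncomputable def pderiv' {d : ℕ} (j : Fin d) (f : (Fin d → ℝ) → ℝ) : (Fin d → ℝ) → ℝ :=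
  fun x => fderiv ℝ f x (Pi.single j 1)

/-- Multi-index partial derivative `∂^γ f = ∂^{γ₁}_{z₁} ⋯ ∂^{γ_d}_{z_d} f`. -/
noncomputable def mderiv {d : ℕ} (γ : Fin d → ℕ) (f : (Fin d → ℝ) → ℝ) :
    (Fin d → ℝ) → ℝ :=
  (List.ofFn fun j : Fin d => (pderiv' j)^[γ j]).foldl (fun g op => op g) f

/-- `(p,C)`-Hölder smoothness of `f : ℝ^d → ℝ` (Definition 1 of the paper):
`f` is `⌊p⌋` times continuously differentiable, all partial derivatives `∂^γ f` with
`|γ| ≤ ⌊p⌋` are bounded by `C`, and those with `|γ| = ⌊p⌋` are `(p−⌊p⌋)`-Hölder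
continuous with constant `C` (Euclidean norm); `⌊p⌋` is the largest integer `< p`. -/
def HolderSmooth {d : ℕ} (p C : ℝ) (f : (Fin d → ℝ) → ℝ) : Prop :=
  ContDiff ℝ (sFloor p) f ∧
  (∀ γ : Fin d → ℕ, (∑ j, γ j) ≤ sFloor p → ∀ z, |mderiv γ f z| ≤ C) ∧
  (∀ γ : Fin d → ℕ, (∑ j, γ j) = sFloor p → ∀ z z' : Fin d → ℝ,
    |mderiv γ f z - mderiv γ f z'| ≤ C * (enorm2 (z - z')) ^ (p - (sFloor p : ℝ)))

/-- The trifling region `Ω(K,δ,d)`. -/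
def trifling (d K : ℕ) (δ : ℝ) : Set (Fin d → ℝ) :=
  {z | ∃ i : Fin d, ∃ k ∈ Finset.Ico 1 K, z i ∈ Set.Ioo ((k : ℝ) / K - δ) ((k : ℝ) / K)}

/-- Modulus of continuity of `f` on `[0,1]^d` (Euclidean norm):
`ω_f(δ) = sup{|f(x)−f(y)| : ‖x−y‖₂ ≤ δ, x,y ∈ [0,1]^d}`. -/
noncomputable def modCont (d : ℕ) (f : (Fin d → ℝ) → ℝ) (δ : ℝ) : ℝ :=
  sSup {v | ∃ x y : Fin d → ℝ, (∀ i, x i ∈ Set.Icc (0 : ℝ) 1) ∧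
    (∀ i, y i ∈ Set.Icc (0 : ℝ) 1) ∧ enorm2 (x - y) ≤ δ ∧ v = |f x - f y|}

/-- Hidden representation: `H` computes `n` layers beyond the first. -/
def RepNN (d W n : ℕ) (H : (Fin d → ℝ) → Fin W → ℝ) : Prop :=
  ∃ (A₁ : Matrix (Fin W) (Fin d) ℝ) (A : ℕ → Matrix (Fin W) (Fin W) ℝ) (v : ℕ → Fin W → ℝ),
    ∀ z, H z = hiddenIter W A v (fun i => max ((A₁.mulVec z) i - v 0 i) 0) n

lemma mem_NNscalar_of {d L W : ℕ} {H : (Fin d → ℝ) → Fin W → ℝ} (hH : RepNN d W (L - 1) H)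
    (a : Fin W → ℝ) (c : ℝ) (f : (Fin d → ℝ) → ℝ)
    (hf : ∀ z, f z = c + ∑ j, a j * H z j) : f ∈ NNscalar d L W := by
  obtain ⟨A₁, A, v, h⟩ := hH
  refine ⟨fun z _ => f z, ⟨A₁, A, v, Matrix.of fun _ j => a j, fun _ => c, ?_⟩, fun z => rfl⟩
  intro z
  funext i
  simp [hf z, h z, Matrix.mulVec, dotProduct]

lemma NNscalar_elim {d L W : ℕ} {f : (Fin d → ℝ) → ℝ} (hf : f ∈ NNscalar d L W) :
    ∃ H, RepNN d W (L - 1) H ∧ ∃ (a : Fin W → ℝ) (c : ℝ), ∀ z, f z = c + ∑ j, a j * H z j := by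
  obtain ⟨g, ⟨A₁, A, v, Aout, vout, hg⟩, hfg⟩ := hf
  refine ⟨fun z => hiddenIter W A v (fun i => max ((A₁.mulVec z) i - v 0 i) 0) (L - 1),
    ⟨A₁, A, v, fun _ => rfl⟩, fun j => Aout 0 j, vout 0, fun z => ?_⟩
  rw [hfg z, hg z]
  simp [Matrix.mulVec, dotProduct]

lemma hiddenIter_nonneg {W : ℕ} {A : ℕ → Matrix (Fin W) (Fin W) ℝ} {v : ℕ → Fin W → ℝ}
    {x0 : Fin W → ℝ} (hx0 : ∀ i, 0 ≤ x0 i) : ∀ k i, 0 ≤ hiddenIter W A v x0 k i := by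
  intro k
  induction k with
  | zero => exact hx0
  | succ k ih => intro i; exact le_max_right _ _

lemma RepNN.nonneg {d W n : ℕ} {H : (Fin d → ℝ) → Fin W → ℝ} (hH : RepNN d W n H) :
    ∀ z i, 0 ≤ H z i := by
  obtain ⟨A₁, A, v, h⟩ := hH
  intro z i
  rw [h z]
  exact hiddenIter_nonneg (fun i => le_max_right _ _) n i

/-- Append one more layer. -/
lemma RepNN.append {d W n : ℕ} {H : (Fin d → ℝ) → Fin W → ℝ} (hH : RepNN d W n H)
    (B : Matrix (Fin W) (Fin W) ℝ) (u : Fin W → ℝ) :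
    RepNN d W (n + 1) (fun z i => max ((B.mulVec (H z)) i - u i) 0) := by
  obtain ⟨A₁, A, v, h⟩ := hH
  refine ⟨A₁, fun k => if k = n then B else A k, fun k => if k = n + 1 then u else v k, ?_⟩
  intro z
  have v0 : (fun k => if k = n + 1 then u else v k) 0 = v 0 := by simp
  have key : ∀ k, k ≤ n → hiddenIter W (fun k => if k = n then B else A k)
      (fun k => if k = n + 1 then u else v k)
      (fun i => max ((A₁.mulVec z) i - v 0 i) 0) k
      = hiddenIter W A v (fun i => max ((A₁.mulVec z) i - v 0 i) 0) k := by
    intro k hk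
    induction k with
    | zero => rfl
    | succ k ih =>
      simp only [hiddenIter]
      rw [ih (by omega)]
      have h1 : (if k = n then B else A k) = A k := by
        rw [if_neg]; omega
      have h2 : (if k + 1 = n + 1 then u else v (k+1)) = v (k + 1) := by
        rw [if_neg]; omega
      rw [h1, h2]
  simp only [v0, hiddenIter, key n le_rfl, ← h z]
  simp

/-- A layer with identity matrix and zero shift keeps a nonnegative vector. -/
lemma RepNN.succ {d W n : ℕ} {H : (Fin d → ℝ) → Fin W → ℝ} (hH : RepNN d W n H) :
    RepNN d W (n + 1) H := by
  have h2 := hH.append 1 0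
  have : (fun z i => max (((1 : Matrix (Fin W) (Fin W) ℝ).mulVec (H z)) i - (0 : Fin W → ℝ) i) 0)
      = H := by
    funext z i
    simp [Matrix.one_mulVec]
    exact hH.nonneg z i
  rwa [this] at h2

lemma RepNN.mono_depth {d W n n' : ℕ} {H : (Fin d → ℝ) → Fin W → ℝ} (hH : RepNN d W n H)
    (hn : n ≤ n') : RepNN d W n' H := by
  induction n' with
  | zero => exact Nat.le_zero.mp hn ▸ hH
  | succ m ih =>
    rcases Nat.lt_or_ge n (m + 1) with h | h
    · exact (ih (by omega)).succ
    · exact (by omega : n = m + 1) ▸ hH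

/-- Sum over a padded function. -/
lemma sum_pad {W W' : ℕ} (hW : W ≤ W') (F : Fin W → ℝ) :
    ∑ j : Fin W', (if h : (j : ℕ) < W then F ⟨j, h⟩ else 0) = ∑ j : Fin W, F j := by
  rw [Fin.sum_univ_eq_sum_range (fun j => if h : j < W then F ⟨j, h⟩ else 0) W',
    ← Finset.sum_subset (Finset.range_subset_range.mpr hW)
      (fun x _ hx => by rw [dif_neg (by simpa using hx)]),
    ← Fin.sum_univ_eq_sum_range (fun j => if h : j < W then F ⟨j, h⟩ else 0) W]
  exact Finset.sum_congr rfl fun j _ => by simp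

lemma sum_pad_mul {W W' : ℕ} (hW : W ≤ W') (P Q : Fin W → ℝ) :
    ∑ j : Fin W', (if h : (j : ℕ) < W then P ⟨j, h⟩ else 0) *
      (if h : (j : ℕ) < W then Q ⟨j, h⟩ else 0) = ∑ j : Fin W, P j * Q j := by
  rw [← sum_pad hW (fun j => P j * Q j)]
  exact Finset.sum_congr rfl fun j _ => by by_cases hj : (j : ℕ) < W <;> simp [hj]

/-- Width padding. -/
lemma RepNN.pad {d W W' n : ℕ} (hW : W ≤ W') {H : (Fin d → ℝ) → Fin W → ℝ}
    (hH : RepNN d W n H) :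
    RepNN d W' n (fun z i => if h : (i : ℕ) < W then H z ⟨i, h⟩ else 0) := by
  obtain ⟨A₁, A, v, h⟩ := hH
  refine ⟨Matrix.of fun i j => if hh : (i : ℕ) < W then A₁ ⟨i, hh⟩ j else 0,
    fun k => Matrix.of fun i j => if hi : (i : ℕ) < W then
      (if hj : (j : ℕ) < W then A k ⟨i, hi⟩ ⟨j, hj⟩ else 0) else 0,
    fun k i => if hh : (i : ℕ) < W then v k ⟨i, hh⟩ else 0, fun z => funext fun i => ?_⟩
  have key : ∀ k, hiddenIter W'
      (fun k => Matrix.of fun i j => if hi : (i : ℕ) < W then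
        (if hj : (j : ℕ) < W then A k ⟨i, hi⟩ ⟨j, hj⟩ else 0) else 0)
      (fun k i => if hh : (i : ℕ) < W then v k ⟨i, hh⟩ else 0)
      (fun i => max (((Matrix.of fun i j => if hh : (i : ℕ) < W then A₁ ⟨i, hh⟩ j else 0 :
          Matrix (Fin W') (Fin d) ℝ).mulVec z) i -
        (if hh : (i : ℕ) < W then v 0 ⟨i, hh⟩ else 0)) 0) k
      = fun i : Fin W' => if hh : (i : ℕ) < W then
          hiddenIter W A v (fun i => max ((A₁.mulVec z) i - v 0 i) 0) k ⟨i, hh⟩ else 0 := by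
    intro k
    induction k with
    | zero =>
      funext i
      by_cases hi : (i : ℕ) < W <;>
        simp [hiddenIter, Matrix.mulVec, dotProduct, hi]
    | succ k ih =>
      funext i
      simp only [hiddenIter, ih]
      by_cases hi : (i : ℕ) < W
      · simp only [Matrix.mulVec, dotProduct, Matrix.of_apply, dif_pos hi]
        congr 2
        exact sum_pad_mul hW _ _
      · simp [Matrix.mulVec, dotProduct, hi]
  show (if hh : (i : ℕ) < W then H z ⟨i, hh⟩ else 0) = _
  rw [key n]
  by_cases hi : (i : ℕ) < W <;> simp [hi, h z]

lemma sum3 {V : ℕ} (t : Fin 3) (F : Fin V → ℝ) (G : Fin 3 × Fin V → ℝ) :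
    ∑ j : Fin (3 * V), (if (finProdFinEquiv.symm j).1 = t then F (finProdFinEquiv.symm j).2
      else 0) * G (finProdFinEquiv.symm j) = ∑ l : Fin V, F l * G (t, l) := by
  rw [← Equiv.sum_comp finProdFinEquiv fun j : Fin (3 * V) =>
    (if (finProdFinEquiv.symm j).1 = t then F (finProdFinEquiv.symm j).2 else 0) *
      G (finProdFinEquiv.symm j)]
  simp only [Equiv.symm_apply_apply]
  rw [Fintype.sum_prod_type]
  have h1 : ∀ s : Fin 3, ∑ l : Fin V, (if s = t then F l else 0) * G (s, l)
      = if s = t then ∑ l : Fin V, F l * G (s, l) else 0 := by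
    intro s; split_ifs <;> simp
  rw [Finset.sum_congr rfl fun s _ => h1 s,
    Finset.sum_ite_eq' Finset.univ t fun s => ∑ l : Fin V, F l * G (s, l)]
  simp

/-- Three parallel translated copies of a hidden representation. -/
lemma RepNN.par3 {d V n : ℕ} {H : (Fin d → ℝ) → Fin V → ℝ} (hH : RepNN d V n H)
    (w : Fin 3 → Fin d → ℝ) :
    RepNN d (3 * V) n (fun z i =>
      H (z + w (finProdFinEquiv.symm i).1) (finProdFinEquiv.symm i).2) := by
  obtain ⟨A₁, A, v, h⟩ := hH
  refine ⟨Matrix.of fun i j => A₁ (finProdFinEquiv.symm i).2 j,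
    fun k => Matrix.of fun i j => if (finProdFinEquiv.symm j).1 = (finProdFinEquiv.symm i).1
      then A k (finProdFinEquiv.symm i).2 (finProdFinEquiv.symm j).2 else 0,
    fun k i => if k = 0 then v 0 (finProdFinEquiv.symm i).2 -
        (A₁.mulVec (w (finProdFinEquiv.symm i).1)) (finProdFinEquiv.symm i).2
      else v k (finProdFinEquiv.symm i).2,
    fun z => funext fun i => ?_⟩
  have key : ∀ (ξ : Fin 3 → Fin V → ℝ) (k), hiddenIter (3 * V)
      (fun k => Matrix.of fun i j =>
        if (finProdFinEquiv.symm j).1 = (finProdFinEquiv.symm i).1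
        then A k (finProdFinEquiv.symm i).2 (finProdFinEquiv.symm j).2 else 0)
      (fun k i => if k = 0 then v 0 (finProdFinEquiv.symm i).2 -
          (A₁.mulVec (w (finProdFinEquiv.symm i).1)) (finProdFinEquiv.symm i).2
        else v k (finProdFinEquiv.symm i).2)
      (fun i => ξ (finProdFinEquiv.symm i).1 (finProdFinEquiv.symm i).2) k
      = fun i : Fin (3 * V) => hiddenIter V A v (ξ (finProdFinEquiv.symm i).1) k
          (finProdFinEquiv.symm i).2 := by
    intro ξ k
    induction k with
    | zero => rfl
    | succ k ih =>
      funext i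
      simp only [hiddenIter, ih]
      have hne : ¬(k + 1 = 0) := Nat.succ_ne_zero k
      rw [if_neg hne]
      congr 2
      simp only [Matrix.mulVec, dotProduct, Matrix.of_apply]
      exact sum3 (finProdFinEquiv.symm i).1
        (fun l => A k (finProdFinEquiv.symm i).2 l)
        (fun p => hiddenIter V A v (ξ p.1) k p.2)
  have hx0 : (fun i : Fin (3 * V) => max (((Matrix.of fun i j =>
        A₁ (finProdFinEquiv.symm i).2 j : Matrix (Fin (3 * V)) (Fin d) ℝ).mulVec z) i -
      (fun k (i : Fin (3 * V)) => if k = 0 then v 0 (finProdFinEquiv.symm i).2 -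
          (A₁.mulVec (w (finProdFinEquiv.symm i).1)) (finProdFinEquiv.symm i).2
        else v k (finProdFinEquiv.symm i).2) 0 i) 0)
      = fun i : Fin (3 * V) =>
        (fun t l => max ((A₁.mulVec (z + w t)) l - v 0 l) 0)
          (finProdFinEquiv.symm i).1 (finProdFinEquiv.symm i).2 := by
    funext i
    simp only [if_pos rfl]
    congr 1
    simp only [Matrix.mulVec, dotProduct, Matrix.of_apply, Pi.add_apply, mul_add,
      Finset.sum_add_distrib, ite_true]
    ring
  show H (z + w (finProdFinEquiv.symm i).1) (finProdFinEquiv.symm i).2 = _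
  rw [hx0, key (fun t l => max ((A₁.mulVec (z + w t)) l - v 0 l) 0) n,
    h (z + w (finProdFinEquiv.symm i).1)]

noncomputable def mid3 (a b c : ℝ) : ℝ :=
  a + b - c - max (max a b - c) 0 + max (c - min a b) 0

lemma mid3_eq (a b c : ℝ) : mid3 a b c = a + b + c - max (max a b) c - min (min a b) c := by
  have h1 : max (max a b - c) 0 = max (max a b) c - c := by
    rcases le_total (max a b) c with h | h <;> simp [max_eq_left, max_eq_right, *]
  have h2 : max (c - min a b) 0 = c - min (min a b) c := by
    rcases le_total (min a b) c with h | h <;> simp [min_eq_left, min_eq_right, *]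
  unfold mid3; rw [h1, h2]; ring

lemma mid3_mem (a b c : ℝ) :
    (min a b ≤ mid3 a b c ∧ mid3 a b c ≤ max a b) ∧
    (min a c ≤ mid3 a b c ∧ mid3 a b c ≤ max a c) ∧
    (min b c ≤ mid3 a b c ∧ mid3 a b c ≤ max b c) := by
  rw [mid3_eq]
  rcases le_total a b with h1 | h1 <;> rcases le_total a c with h2 | h2 <;>
    rcases le_total b c with h3 | h3 <;>
    simp [max_def, min_def] <;> split_ifs <;> constructorm* _ ∧ _ <;> linarith

lemma mid3_close {a b c t r : ℝ} (h : (|a - t| ≤ r ∧ |b - t| ≤ r) ∨ (|a - t| ≤ r ∧ |c - t| ≤ r)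
    ∨ (|b - t| ≤ r ∧ |c - t| ≤ r)) : |mid3 a b c - t| ≤ r := by
  obtain ⟨⟨h1, h2⟩, ⟨h3, h4⟩, h5, h6⟩ := mid3_mem a b c
  rw [abs_le]
  rcases h with ⟨ha, hb⟩ | ⟨ha, hb⟩ | ⟨ha, hb⟩ <;> rw [abs_le] at ha hb
  · have l1 := le_min (by linarith : t - r ≤ a) (by linarith : t - r ≤ b)
    have l2 := max_le (by linarith : a ≤ t + r) (by linarith : b ≤ t + r)
    constructor <;> linarith
  · have l1 := le_min (by linarith : t - r ≤ a) (by linarith : t - r ≤ c)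
    have l2 := max_le (by linarith : a ≤ t + r) (by linarith : c ≤ t + r)
    constructor <;> linarith
  · have l1 := le_min (by linarith : t - r ≤ b) (by linarith : t - r ≤ c)
    have l2 := max_le (by linarith : b ≤ t + r) (by linarith : c ≤ t + r)
    constructor <;> linarith


lemma sum_low {N n : ℕ} (hn : n ≤ N) (F : Fin N → ℝ) (hF : ∀ j : Fin N, n ≤ (j : ℕ) → F j = 0) :
    ∑ j : Fin N, F j = ∑ j ∈ Finset.range n, (if h : j < N then F ⟨j, h⟩ else 0) := by
  have h1 : ∑ j : Fin N, F j = ∑ j ∈ Finset.range N, (if h : j < N then F ⟨j, h⟩ else 0) := by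
    rw [← Fin.sum_univ_eq_sum_range (fun j => if h : j < N then F ⟨j, h⟩ else 0) N]
    exact Finset.sum_congr rfl fun j _ => by simp
  rw [h1]
  exact (Finset.sum_subset (Finset.range_subset_range.mpr hn) fun x hx hx2 => by
    rw [dif_pos (Finset.mem_range.mp hx)]
    exact hF _ (by simpa using hx2)).symm

section comb3

lemma comb3 {d L V : ℕ} (hL : 1 ≤ L) (hV : 3 ≤ V) {g : (Fin d → ℝ) → ℝ}
    (hg : g ∈ NNscalar d L V) (w₁ w₂ : Fin d → ℝ) :
    (fun z => mid3 (g (z + w₁)) (g z) (g (z + w₂))) ∈ NNscalar d (L + 2) (3 * V) := by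
  obtain ⟨H, hH, a, c, hgz⟩ := NNscalar_elim hg
  set w : Fin 3 → Fin d → ℝ := ![w₁, 0, w₂] with hw
  set H3 : (Fin d → ℝ) → Fin (3 * V) → ℝ := fun z i =>
    H (z + w (finProdFinEquiv.symm i).1) (finProdFinEquiv.symm i).2 with hH3def
  have hH3 : RepNN d (3 * V) (L - 1) H3 := hH.par3 w
  set r : Fin 3 → Fin (3 * V) → ℝ := fun t i =>
    if (finProdFinEquiv.symm i).1 = t then a (finProdFinEquiv.symm i).2 else 0 with hr
  have hdot : ∀ (t : Fin 3) z, ∑ i, r t i * H3 z i = g (z + w t) - c := by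
    intro t z
    have h1 := sum3 t a (fun p => H (z + w p.1) p.2)
    rw [hr, hH3def]
    simp only at h1 ⊢
    rw [h1, hgz (z + w t)]
    ring
  -- coefficient functions for layer 1
  set c0 : Fin (3 * V) → ℝ := fun i => if (i : ℕ) = 0 then 1 else if (i : ℕ) = 1 then -1
    else if (i : ℕ) = 6 then 1 else if (i : ℕ) = 7 then -1 else 0 with hc0
  set c1 : Fin (3 * V) → ℝ := fun i => if (i : ℕ) = 0 then -1 else if (i : ℕ) = 1 then 1
    else if (i : ℕ) = 2 then 1 else if (i : ℕ) = 3 then -1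
    else if (i : ℕ) = 6 then 1 else if (i : ℕ) = 7 then -1 else 0 with hc1
  set c2 : Fin (3 * V) → ℝ := fun i => if (i : ℕ) = 4 then 1 else if (i : ℕ) = 5 then -1
    else if (i : ℕ) = 6 then -1 else if (i : ℕ) = 7 then 1 else 0 with hc2
  set B1 : Matrix (Fin (3 * V)) (Fin (3 * V)) ℝ :=
    Matrix.of fun i j => c0 i * r 0 j + c1 i * r 1 j + c2 i * r 2 j with hB1
  set u1 : Fin (3 * V) → ℝ := fun i => -(c0 i + c1 i + c2 i) * c with hu1
  set U : (Fin d → ℝ) → Fin (3 * V) → ℝ :=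
    fun z i => max ((B1.mulVec (H3 z)) i - u1 i) 0 with hUdef
  have hU : RepNN d (3 * V) L U := by
    have h2 := hH3.append B1 u1
    rwa [show L - 1 + 1 = L by omega] at h2
  have hUval : ∀ z i, U z i
      = max (c0 i * g (z + w₁) + c1 i * g z + c2 i * g (z + w₂)) 0 := by
    intro z i
    rw [hUdef]
    simp only [Matrix.mulVec, dotProduct, hB1, Matrix.of_apply]
    have hsum : ∑ j, (c0 i * r 0 j + c1 i * r 1 j + c2 i * r 2 j) * H3 z j
        = c0 i * (g (z + w 0) - c) + c1 i * (g (z + w 1) - c) + c2 i * (g (z + w 2) - c) := by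
      simp only [add_mul, Finset.sum_add_distrib, mul_assoc, ← Finset.mul_sum]
      rw [hdot 0 z, hdot 1 z, hdot 2 z]
    rw [hsum, hu1]
    have hw0 : w 0 = w₁ := rfl
    have hw1 : z + w 1 = z := by rw [hw]; simp
    have hw2 : w 2 = w₂ := rfl
    rw [hw0, hw1, hw2]
    congr 1
    ring
  -- small real facts
  have hreluid : ∀ x : ℝ, max (max x 0) 0 = max x 0 := fun x => max_eq_left (le_max_right x 0)
  have hxx : ∀ x : ℝ, max x 0 - max (-x) 0 = x := by
    intro x; rcases le_total x 0 with h | h <;>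
      simp [max_eq_left, max_eq_right, neg_nonneg.mpr, neg_nonpos.mpr, h] <;> linarith
  have hmaxab : ∀ a b : ℝ, max (a - b) 0 + b = max a b := by
    intro a b; rcases le_total a b with h | h <;>
      simp [max_eq_left, max_eq_right, sub_nonpos.mpr, sub_nonneg.mpr, h]
  have hminab : ∀ a b : ℝ, b - max (b - a) 0 = min a b := by
    intro a b; rcases le_total a b with h | h <;>
      simp [min_eq_left, min_eq_right, sub_nonpos.mpr, sub_nonneg.mpr, h] <;> linarith
  have hNine : 9 ≤ 3 * V := by omega
  -- layer 2
  set q0 : Fin (3 * V) → ℝ := fun j => if (j : ℕ) = 0 then 1 else if (j : ℕ) = 2 then 1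
    else if (j : ℕ) = 3 then -1 else if (j : ℕ) = 4 then -1
    else if (j : ℕ) = 5 then 1 else 0 with hq0
  set q1 : Fin (3 * V) → ℝ := fun j => if (j : ℕ) = 1 then 1 else if (j : ℕ) = 2 then -1
    else if (j : ℕ) = 3 then 1 else if (j : ℕ) = 4 then 1
    else if (j : ℕ) = 5 then -1 else 0 with hq1
  set q2 : Fin (3 * V) → ℝ := fun j => if (j : ℕ) = 6 then 1 else 0 with hq2
  set q3 : Fin (3 * V) → ℝ := fun j => if (j : ℕ) = 7 then 1 else 0 with hq3
  set B2 : Matrix (Fin (3 * V)) (Fin (3 * V)) ℝ := Matrix.of fun i j =>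
    if (i : ℕ) = 0 then q0 j else if (i : ℕ) = 1 then q1 j
    else if (i : ℕ) = 2 then q2 j else if (i : ℕ) = 3 then q3 j else 0 with hB2
  set U2 : (Fin d → ℝ) → Fin (3 * V) → ℝ :=
    fun z i => max ((B2.mulVec (U z)) i - (0 : Fin (3 * V) → ℝ) i) 0 with hU2def
  have hU2 : RepNN d (3 * V) (L + 1) U2 := hU.append B2 0
  set aout : Fin (3 * V) → ℝ := fun i => if (i : ℕ) = 0 then -1 else if (i : ℕ) = 1 then 1
    else if (i : ℕ) = 2 then 1 else if (i : ℕ) = 3 then -1 else 0 with haout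
  have hrow : ∀ (q : Fin (3 * V) → ℝ), (∀ j : Fin (3 * V), 8 ≤ (j : ℕ) → q j = 0) →
      ∀ X : Fin (3 * V) → ℝ, ∑ j, q j * X j =
        q ⟨0, by omega⟩ * X ⟨0, by omega⟩ + q ⟨1, by omega⟩ * X ⟨1, by omega⟩ +
        q ⟨2, by omega⟩ * X ⟨2, by omega⟩ + q ⟨3, by omega⟩ * X ⟨3, by omega⟩ +
        q ⟨4, by omega⟩ * X ⟨4, by omega⟩ + q ⟨5, by omega⟩ * X ⟨5, by omega⟩ +
        q ⟨6, by omega⟩ * X ⟨6, by omega⟩ + q ⟨7, by omega⟩ * X ⟨7, by omega⟩ := by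
    intro q hq X
    rw [sum_low (by omega : 8 ≤ 3 * V) (fun j => q j * X j)
      (fun j hj => by show q j * X j = 0; rw [hq j hj, zero_mul])]
    simp only [Finset.sum_range_succ, Finset.sum_range_zero]
    rw [dif_pos (show (0 : ℕ) < 3 * V by omega), dif_pos (show (1 : ℕ) < 3 * V by omega),
      dif_pos (show (2 : ℕ) < 3 * V by omega), dif_pos (show (3 : ℕ) < 3 * V by omega),
      dif_pos (show (4 : ℕ) < 3 * V by omega), dif_pos (show (5 : ℕ) < 3 * V by omega),
      dif_pos (show (6 : ℕ) < 3 * V by omega), dif_pos (show (7 : ℕ) < 3 * V by omega)]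
    ring
  refine mem_NNscalar_of (H := U2) hU2 aout 0 _ fun z => ?_
  have hUv : ∀ (m : ℕ) (hm : m < 3 * V), U z ⟨m, hm⟩ =
      max (c0 ⟨m, hm⟩ * g (z + w₁) + c1 ⟨m, hm⟩ * g z + c2 ⟨m, hm⟩ * g (z + w₂)) 0 :=
    fun m hm => hUval z ⟨m, hm⟩
  have hU0 : U z ⟨0, by omega⟩ = max (g (z + w₁) - g z) 0 := by
    rw [hUv]; norm_num [hc0, hc1, hc2]; try (congr 1 <;> ring)
  have hU1 : U z ⟨1, by omega⟩ = max (g z - g (z + w₁)) 0 := by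
    rw [hUv]; norm_num [hc0, hc1, hc2]; try (congr 1 <;> ring)
  have hU2' : U z ⟨2, by omega⟩ = max (g z) 0 := by
    rw [hUv]; norm_num [hc0, hc1, hc2]; try (congr 1 <;> ring)
  have hU3 : U z ⟨3, by omega⟩ = max (-g z) 0 := by
    rw [hUv]; norm_num [hc0, hc1, hc2]; try (congr 1 <;> ring)
  have hU4 : U z ⟨4, by omega⟩ = max (g (z + w₂)) 0 := by
    rw [hUv]; norm_num [hc0, hc1, hc2]; try (congr 1 <;> ring)
  have hU5 : U z ⟨5, by omega⟩ = max (-g (z + w₂)) 0 := by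
    rw [hUv]; norm_num [hc0, hc1, hc2]; try (congr 1 <;> ring)
  have hU6 : U z ⟨6, by omega⟩ = max (g (z + w₁) + g z - g (z + w₂)) 0 := by
    rw [hUv]; norm_num [hc0, hc1, hc2]; try (congr 1 <;> ring)
  have hU7 : U z ⟨7, by omega⟩ = max (-(g (z + w₁) + g z - g (z + w₂))) 0 := by
    rw [hUv]; norm_num [hc0, hc1, hc2]; try (congr 1 <;> ring)
  have hq0supp : ∀ j : Fin (3 * V), 8 ≤ (j : ℕ) → q0 j = 0 := by
    intro j hj; simp only [hq0]
    rw [if_neg (by omega), if_neg (by omega), if_neg (by omega), if_neg (by omega),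
      if_neg (by omega)]
  have hq1supp : ∀ j : Fin (3 * V), 8 ≤ (j : ℕ) → q1 j = 0 := by
    intro j hj; simp only [hq1]
    rw [if_neg (by omega), if_neg (by omega), if_neg (by omega), if_neg (by omega),
      if_neg (by omega)]
  have hq2supp : ∀ j : Fin (3 * V), 8 ≤ (j : ℕ) → q2 j = 0 := by
    intro j hj; simp only [hq2]; rw [if_neg (by omega)]
  have hq3supp : ∀ j : Fin (3 * V), 8 ≤ (j : ℕ) → q3 j = 0 := by
    intro j hj; simp only [hq3]; rw [if_neg (by omega)]
  have hB2r0 : (B2.mulVec (U z)) ⟨0, by omega⟩ = ∑ j, q0 j * U z j := by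
    simp only [Matrix.mulVec, dotProduct, hB2, Matrix.of_apply]
    exact Finset.sum_congr rfl fun x _ => by norm_num
  have hB2r1 : (B2.mulVec (U z)) ⟨1, by omega⟩ = ∑ j, q1 j * U z j := by
    simp only [Matrix.mulVec, dotProduct, hB2, Matrix.of_apply]
    exact Finset.sum_congr rfl fun x _ => by norm_num
  have hB2r2 : (B2.mulVec (U z)) ⟨2, by omega⟩ = ∑ j, q2 j * U z j := by
    simp only [Matrix.mulVec, dotProduct, hB2, Matrix.of_apply]
    exact Finset.sum_congr rfl fun x _ => by norm_num
  have hB2r3 : (B2.mulVec (U z)) ⟨3, by omega⟩ = ∑ j, q3 j * U z j := by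
    simp only [Matrix.mulVec, dotProduct, hB2, Matrix.of_apply]
    exact Finset.sum_congr rfl fun x _ => by norm_num
  have hV0 : (B2.mulVec (U z)) ⟨0, by omega⟩ = max (g (z + w₁)) (g z) - g (z + w₂) := by
    rw [hB2r0, hrow q0 hq0supp (U z)]
    simp only [hq0]
    norm_num
    rw [hU0, hU2', hU3, hU4, hU5]
    have e1 := hxx (g z); have e2 := hxx (g (z + w₂))
    have e3 := hmaxab (g (z + w₁)) (g z)
    linarith
  have hV1 : (B2.mulVec (U z)) ⟨1, by omega⟩ = g (z + w₂) - min (g (z + w₁)) (g z) := by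
    rw [hB2r1, hrow q1 hq1supp (U z)]
    simp only [hq1]
    norm_num
    rw [hU1, hU2', hU3, hU4, hU5]
    have e1 := hxx (g z); have e2 := hxx (g (z + w₂))
    have e3 := hminab (g (z + w₁)) (g z)
    linarith
  have hV2 : (B2.mulVec (U z)) ⟨2, by omega⟩ = max (g (z + w₁) + g z - g (z + w₂)) 0 := by
    rw [hB2r2, hrow q2 hq2supp (U z)]
    simp only [hq2]
    norm_num
    rw [hU6]
  have hV3 : (B2.mulVec (U z)) ⟨3, by omega⟩
      = max (-(g (z + w₁) + g z - g (z + w₂))) 0 := by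
    rw [hB2r3, hrow q3 hq3supp (U z)]
    simp only [hq3]
    norm_num
    rw [hU7]
    try (congr 1 <;> ring)
  have hW : ∀ (m : ℕ) (hm : m < 3 * V), U2 z ⟨m, hm⟩
      = max ((B2.mulVec (U z)) ⟨m, hm⟩ - 0) 0 := fun m hm => rfl
  have haoutsupp : ∀ j : Fin (3 * V), 8 ≤ (j : ℕ) → aout j = 0 := by
    intro j hj; simp only [haout]
    rw [if_neg (by omega), if_neg (by omega), if_neg (by omega), if_neg (by omega)]
  show mid3 (g (z + w₁)) (g z) (g (z + w₂)) = _
  rw [hrow aout haoutsupp (U2 z)]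
  simp only [haout]
  norm_num
  rw [hW 0 (by omega), hW 1 (by omega), hW 2 (by omega), hW 3 (by omega),
    hV0, hV1, hV2, hV3, sub_zero, sub_zero, sub_zero, sub_zero, hreluid, hreluid]
  have e4 := hxx (g (z + w₁) + g z - g (z + w₂))
  simp only [mid3]
  linarith
end comb3

lemma NNscalar_mono_width {d L W W' : ℕ} (hW : W ≤ W') {f : (Fin d → ℝ) → ℝ}
    (hf : f ∈ NNscalar d L W) : f ∈ NNscalar d L W' := by
  obtain ⟨H, hH, a, c, hfz⟩ := NNscalar_elim hf
  refine mem_NNscalar_of (hH.pad hW) (fun i => if h : (i : ℕ) < W then a ⟨i, h⟩ else 0) c f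
    fun z => ?_
  rw [hfz z]
  congr 1
  exact (sum_pad_mul hW a (fun j => H z j)).symm

lemma NNscalar_mono_depth {d L L' W : ℕ} (hL : 1 ≤ L) (hLL : L ≤ L') {f : (Fin d → ℝ) → ℝ}
    (hf : f ∈ NNscalar d L W) : f ∈ NNscalar d L' W := by
  obtain ⟨H, hH, a, c, hfz⟩ := NNscalar_elim hf
  exact mem_NNscalar_of (hH.mono_depth (by omega)) a c f hfz

def OkPt (K : ℕ) (δ x : ℝ) : Prop :=
  0 ≤ x ∧ x ≤ 1 ∧ ∀ k ∈ Finset.Ico 1 K, x ∉ Set.Ioo ((k : ℝ) / K - δ) ((k : ℝ) / K)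

lemma bad_pair {K : ℕ} {δ : ℝ} (hK : 0 < K) (hδ0 : 0 < δ) (hδ : 3 * δ * (K : ℝ) < 1)
    {y s : ℝ} (hs1 : δ ≤ s) (hs2 : s ≤ 2 * δ)
    (h1 : ∃ k ∈ Finset.Ico 1 K, y ∈ Set.Ioo ((k : ℝ) / K - δ) ((k : ℝ) / K))
    (h2 : ∃ k ∈ Finset.Ico 1 K, (y + s) ∈ Set.Ioo ((k : ℝ) / K - δ) ((k : ℝ) / K)) :
    False := by
  obtain ⟨j, hj, hyj1, hyj2⟩ := h1
  obtain ⟨k, hk, hyk1, hyk2⟩ := h2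
  have hK0 : (0 : ℝ) < K := by exact_mod_cast hK
  have hKne : (K : ℝ) ≠ 0 := ne_of_gt hK0
  have h3δ : 3 * δ < 1 / K := by rw [lt_div_iff₀ hK0]; linarith
  have hjk : (j : ℝ) / K < (k : ℝ) / K := by linarith
  have hjkr : (j : ℝ) < k := by
    have h := mul_lt_mul_of_pos_right hjk hK0
    rwa [div_mul_cancel₀ _ hKne, div_mul_cancel₀ _ hKne] at h
  have hjknat : j + 1 ≤ k := by exact_mod_cast hjkr
  have h1k : (1 : ℝ) ≤ (k : ℝ) - j := by
    have : ((j : ℝ) + 1) ≤ k := by exact_mod_cast hjknat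
    linarith
  have hgap : (1 : ℝ) / K ≤ ((k : ℝ) - j) / K := by gcongr
  have hsd : ((k : ℝ) - j) / K = (k : ℝ) / K - (j : ℝ) / K := sub_div _ _ _
  linarith

lemma two_good {K : ℕ} {δ : ℝ} (hK : 0 < K) (hδ0 : 0 < δ) (hδ : 3 * δ * (K : ℝ) < 1)
    {x : ℝ} (hx0 : 0 ≤ x) (hx1 : x ≤ 1) :
    (OkPt K δ (x - δ) ∧ OkPt K δ x) ∨ (OkPt K δ (x - δ) ∧ OkPt K δ (x + δ)) ∨
    (OkPt K δ x ∧ OkPt K δ (x + δ)) := by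
  have hK0 : (0 : ℝ) < K := by exact_mod_cast hK
  have hKne : (K : ℝ) ≠ 0 := ne_of_gt hK0
  have hK1 : (1 : ℝ) ≤ K := by exact_mod_cast hK
  have h3δ : 3 * δ < 1 / K := by rw [lt_div_iff₀ hK0]; linarith
  have h1K : 1 / (K : ℝ) ≤ 1 := by rw [div_le_one hK0]; exact hK1
  have hbound : ∀ m ∈ Finset.Ico 1 K, (1 : ℝ) / K ≤ (m : ℝ) / K ∧ (m : ℝ) / K ≤ 1 - 1 / K := by
    intro m hm
    obtain ⟨hm1, hm2⟩ := Finset.mem_Ico.mp hm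
    constructor
    · gcongr; exact_mod_cast hm1
    · have : (m : ℝ) ≤ (K : ℝ) - 1 := by
        have : (m : ℝ) + 1 ≤ K := by exact_mod_cast hm2
        linarith
      calc (m : ℝ) / K ≤ ((K : ℝ) - 1) / K := by gcongr
        _ = 1 - 1 / K := by field_simp
  by_cases bx : ∃ k ∈ Finset.Ico 1 K, x ∈ Set.Ioo ((k : ℝ) / K - δ) ((k : ℝ) / K)
  · -- x is bad: use x - δ and x + δ
    right; left
    obtain ⟨j, hj, hxj1, hxj2⟩ := bx
    obtain ⟨hjl, hjr⟩ := hbound j hj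
    refine ⟨⟨by linarith, by linarith, fun k hk hmem => ?_⟩,
      ⟨by linarith, by linarith, fun k hk hmem => ?_⟩⟩
    · exact bad_pair hK hδ0 hδ (le_refl δ) (by linarith) ⟨k, hk, hmem⟩
        ⟨j, hj, by constructor <;> [linarith [hmem.1]; linarith] ⟩
    · exact bad_pair hK hδ0 hδ (le_refl δ) (by linarith) ⟨j, hj, ⟨hxj1, hxj2⟩⟩
        ⟨k, hk, hmem⟩
  · by_cases b2 : x + δ ≤ 1 ∧ ¬∃ k ∈ Finset.Ico 1 K, (x + δ) ∈
        Set.Ioo ((k : ℝ) / K - δ) ((k : ℝ) / K)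
    · right; right
      exact ⟨⟨hx0, hx1, fun k hk hmem => bx ⟨k, hk, hmem⟩⟩,
        ⟨by linarith, b2.1, fun k hk hmem => b2.2 ⟨k, hk, hmem⟩⟩⟩
    · left
      rcases not_and_or.mp b2 with hb | hb
      · -- x + δ > 1, so x > 1 - δ
        push_neg at hb
        have hgood : ∀ k ∈ Finset.Ico 1 K, (x - δ) ∉
            Set.Ioo ((k : ℝ) / K - δ) ((k : ℝ) / K) := by
          intro k hk hmem
          obtain ⟨hkl, hkr⟩ := hbound k hk
          have := hmem.2
          linarith
        exact ⟨⟨by linarith, by linarith, hgood⟩, ⟨hx0, hx1, fun k hk hmem => bx ⟨k, hk, hmem⟩⟩⟩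
      · push_neg at hb
        obtain ⟨j, hj, hxj1, hxj2⟩ := hb
        obtain ⟨hjl, hjr⟩ := hbound j hj
        have hgood : ∀ k ∈ Finset.Ico 1 K, (x - δ) ∉
            Set.Ioo ((k : ℝ) / K - δ) ((k : ℝ) / K) := by
          intro k hk hmem
          exact bad_pair hK hδ0 hδ (by linarith : δ ≤ 2 * δ) (le_refl (2 * δ))
            ⟨k, hk, hmem⟩ ⟨j, hj, by constructor <;> [linarith [hmem.1]; linarith]⟩
        exact ⟨⟨by linarith, by linarith, hgood⟩,
          ⟨hx0, hx1, fun k hk hmem => bx ⟨k, hk, hmem⟩⟩⟩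

lemma enorm2_ite {d : ℕ} (ι : Fin d) (c : ℝ) :
    enorm2 (fun j => if j = ι then c else 0) = |c| := by
  unfold enorm2
  have h1 : ∑ j : Fin d, (if j = ι then c else 0) ^ 2 = c ^ 2 := by
    have h2 : ∀ j : Fin d, (if j = ι then c else 0) ^ 2 = if j = ι then c ^ 2 else 0 := by
      intro j; split_ifs <;> simp
    rw [Finset.sum_congr rfl fun j _ => h2 j, Finset.sum_ite_eq' Finset.univ ι fun _ => c ^ 2]
    simp
  rw [h1, Real.sqrt_sq_eq_abs]

/-- If a ReLU network `g̃ ∈ F_{d,1}(L,W)` approximates a continuous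
`f` to accuracy `ε` on `[0,1]^d ∖ Ω(K,δ,d)`, then some `g ∈ F_{d,1}(L+2d, 3^d(W+3))`
approximates `f` to accuracy `ε + d·ω_f(δ)` on all of `[0,1]^d`. -/
theorem statement10 (d : ℕ) (hd : 0 < d) (ε : ℝ) (hε : 0 < ε)
    (L W K : ℕ) (hL : 0 < L) (hW : 0 < W) (hK : 0 < K)
    (δ : ℝ) (hδ0 : 0 < δ) (hδ : δ < 1 / (3 * (K : ℝ)))
    (f : (Fin d → ℝ) → ℝ)
    (hf : ContinuousOn f {z | ∀ i, z i ∈ Set.Icc (0 : ℝ) 1})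
    (gt : (Fin d → ℝ) → ℝ) (hgt : gt ∈ NNscalar d L W)
    (happrox : ∀ z : Fin d → ℝ, (∀ i, z i ∈ Set.Icc (0 : ℝ) 1) →
      z ∉ trifling d K δ → |f z - gt z| ≤ ε) :
    ∃ g ∈ NNscalar d (L + 2 * d) (3 ^ d * (W + 3)),
      ∀ z : Fin d → ℝ, (∀ i, z i ∈ Set.Icc (0 : ℝ) 1) →
        |f z - g z| ≤ ε + d * modCont d f δ := by
  classical
  set ω := modCont d f δ with hω
  have hK0 : (0 : ℝ) < K := by exact_mod_cast hK
  have hδ3 : 3 * δ * (K : ℝ) < 1 := by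
    rw [lt_div_iff₀ (by positivity : (0 : ℝ) < 3 * K)] at hδ
    linarith
  have hcubeC : IsCompact {z : Fin d → ℝ | ∀ i, z i ∈ Set.Icc (0 : ℝ) 1} := by
    have he : {z : Fin d → ℝ | ∀ i, z i ∈ Set.Icc (0 : ℝ) 1}
        = Set.pi Set.univ fun _ => Set.Icc (0 : ℝ) 1 := by
      ext zz; simp [Set.mem_pi, Set.mem_Icc, Pi.le_def, forall_and]
    rw [he]; exact isCompact_univ_pi fun _ => isCompact_Icc
  obtain ⟨C, hC⟩ := hcubeC.exists_bound_of_continuousOn hf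
  have hbdd : BddAbove {v | ∃ x y : Fin d → ℝ, (∀ i, x i ∈ Set.Icc (0 : ℝ) 1) ∧
      (∀ i, y i ∈ Set.Icc (0 : ℝ) 1) ∧ enorm2 (x - y) ≤ δ ∧ v = |f x - f y|} := by
    refine ⟨2 * C, fun v hv => ?_⟩
    obtain ⟨x, y, hx, hy, _, rfl⟩ := hv
    have h1 := hC x hx; have h2 := hC y hy
    rw [Real.norm_eq_abs] at h1 h2
    calc |f x - f y| ≤ |f x| + |f y| := by
          simpa [sub_eq_add_neg] using abs_add_le (f x) (-(f y))
      _ ≤ 2 * C := by linarith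
  have hωb : ∀ x y : Fin d → ℝ, (∀ i, x i ∈ Set.Icc (0 : ℝ) 1) →
      (∀ i, y i ∈ Set.Icc (0 : ℝ) 1) → enorm2 (x - y) ≤ δ → |f x - f y| ≤ ω := by
    intro x y hx hy hdist
    rw [hω]; unfold modCont
    exact le_csSup hbdd ⟨x, y, hx, hy, hdist, rfl⟩
  have hω0 : 0 ≤ ω := by
    rw [hω]; unfold modCont
    refine le_csSup hbdd ⟨fun _ => 0, fun _ => 0, fun i => by norm_num, fun i => by norm_num,
      ?_, by simp⟩
    simp only [sub_self]
    unfold enorm2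
    simp [le_of_lt hδ0]
  have main : ∀ i : ℕ, i ≤ d → ∃ g ∈ NNscalar d (L + 2 * i) (3 ^ i * (W + 3)),
      ∀ z : Fin d → ℝ, (∀ j, z j ∈ Set.Icc (0 : ℝ) 1) →
      (∀ j : Fin d, i ≤ (j : ℕ) → ∀ k ∈ Finset.Ico 1 K,
        z j ∉ Set.Ioo ((k : ℝ) / K - δ) ((k : ℝ) / K)) →
      |f z - g z| ≤ ε + i * ω := by
    intro i
    induction i with
    | zero =>
      intro _
      refine ⟨gt, ?_, ?_⟩
      · rw [show L + 2 * 0 = L by ring, show 3 ^ 0 * (W + 3) = W + 3 by norm_num]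
        exact NNscalar_mono_width (by omega) hgt
      · intro z hz hgood
        have hnt : z ∉ trifling d K δ := by
          rintro ⟨ii, k, hk, hmem⟩
          exact hgood ii (Nat.zero_le _) k hk hmem
        simpa using happrox z hz hnt
    | succ i ih =>
      intro hi1
      obtain ⟨g, hgmem, hgapp⟩ := ih (by omega)
      set ι : Fin d := ⟨i, by omega⟩ with hι
      set w₁ : Fin d → ℝ := fun j => if j = ι then -δ else 0 with hw₁
      set w₂ : Fin d → ℝ := fun j => if j = ι then δ else 0 with hw₂
      have h3V : 3 ≤ 3 ^ i * (W + 3) := by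
        have h1 : 1 ≤ 3 ^ i := Nat.one_le_pow _ _ (by norm_num)
        calc 3 ≤ 1 * (W + 3) := by omega
          _ ≤ 3 ^ i * (W + 3) := Nat.mul_le_mul_right _ h1
      have hmem2 := comb3 (by omega : 1 ≤ L + 2 * i) h3V hgmem w₁ w₂
      refine ⟨fun z => mid3 (g (z + w₁)) (g z) (g (z + w₂)), ?_, ?_⟩
      · rw [show L + 2 * (i + 1) = L + 2 * i + 2 by ring,
          show 3 ^ (i + 1) * (W + 3) = 3 * (3 ^ i * (W + 3)) by ring]
        exact hmem2
      · intro z hz hgood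
        have key : ∀ s : ℝ, |s| ≤ δ → OkPt K δ (z ι + s) →
            |g (z + fun j => if j = ι then s else 0) - f z| ≤ ε + i * ω + ω := by
          intro s hs hok
          set z' : Fin d → ℝ := z + fun j => if j = ι then s else 0 with hz'def
          have hz'ι : z' ι = z ι + s := by simp [hz'def]
          have hz'c : ∀ j, z' j ∈ Set.Icc (0 : ℝ) 1 := by
            intro j
            by_cases hj : j = ι
            · subst hj; rw [hz'ι]; exact ⟨hok.1, hok.2.1⟩
            · have : z' j = z j := by simp [hz'def, hj]
              rw [this]; exact hz j
          have hz'good : ∀ j : Fin d, i ≤ (j : ℕ) → ∀ k ∈ Finset.Ico 1 K,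
              z' j ∉ Set.Ioo ((k : ℝ) / K - δ) ((k : ℝ) / K) := by
            intro j hj k hk
            by_cases hjι : j = ι
            · subst hjι; rw [hz'ι]; exact hok.2.2 k hk
            · have hne : (j : ℕ) ≠ i := fun h => hjι (Fin.ext h)
              have hzj : z' j = z j := by simp [hz'def, hjι]
              rw [hzj]
              exact hgood j (by omega) k hk
          have h5 := hgapp z' hz'c hz'good
          have hzz' : z - z' = fun j => if j = ι then -s else 0 := by
            funext j
            simp only [hz'def, Pi.sub_apply, Pi.add_apply]
            split_ifs <;> ring
          have h6 : |f z - f z'| ≤ ω := by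
            refine hωb z z' hz hz'c ?_
            rw [hzz', enorm2_ite, abs_neg]
            exact hs
          calc |g z' - f z| ≤ |g z' - f z'| + |f z' - f z| := abs_sub_le _ _ _
            _ ≤ (ε + i * ω) + ω := add_le_add (by rwa [abs_sub_comm] at h5)
                (by rwa [abs_sub_comm] at h6)
        have hze : (z + fun j => if j = ι then (0 : ℝ) else 0) = z := by
          funext j; simp
        have hb : |g z - f z| ≤ ε + i * ω + ω → True := fun _ => trivial
        have hfin : |mid3 (g (z + w₁)) (g z) (g (z + w₂)) - f z| ≤ ε + i * ω + ω := by
          rcases two_good hK hδ0 hδ3 (hz ι).1 (hz ι).2 with ⟨h1, h2⟩ | ⟨h1, h2⟩ | ⟨h1, h2⟩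
          · refine mid3_close (Or.inl ⟨?_, ?_⟩)
            · exact key (-δ) (by rw [abs_neg, abs_of_pos hδ0]) (by rwa [← sub_eq_add_neg])
            · have := key 0 (by simp [le_of_lt hδ0]) (by rwa [add_zero])
              rwa [hze] at this
          · refine mid3_close (Or.inr (Or.inl ⟨?_, ?_⟩))
            · exact key (-δ) (by rw [abs_neg, abs_of_pos hδ0]) (by rwa [← sub_eq_add_neg])
            · exact key δ (by rw [abs_of_pos hδ0]) h2
          · refine mid3_close (Or.inr (Or.inr ⟨?_, ?_⟩))
            · have := key 0 (by simp [le_of_lt hδ0]) (by rwa [add_zero])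
              rwa [hze] at this
            · exact key δ (by rw [abs_of_pos hδ0]) h2
        rw [abs_sub_comm]
        calc |mid3 (g (z + w₁)) (g z) (g (z + w₂)) - f z| ≤ ε + i * ω + ω := hfin
          _ = ε + (i + 1 : ℕ) * ω := by push_cast; ring
  obtain ⟨g, hgmem, hgapp⟩ := main d le_rfl
  exact ⟨g, hgmem, fun z hz => hgapp z hz fun j hj k hk => absurd j.isLt (by omega)⟩
end

section
/- Let L* be a nonnegative integer and let p₀, p₁, …, p_{L*} be positive real numbers. Define the sequence (p̃ᵢ) by p̃₀ = p₀ and p̃ᵢ = min{ p̃_{i−1}·pᵢ, p̃_{i−1}, pᵢ } for i = 1,…,L*. Then p̃_{L*} ≤ min_{0≤i≤L*} pᵢ ∏_{s=i+1}^{L*} min(pₛ, 1), with the convention that the empty product ∏_{s=L*+1}^{L*} min(pₛ,1) equals 1. -/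
/-!
Since `p̃ᵢ ≤ pᵢ`, it suffices to show that each later step of the recursion multiplies the
bound by at most `min(pₛ, 1)`: by `pₛ` through the term `p̃ₛ₋₁ pₛ` when `pₛ ≤ 1`, and by `1`
through the term `p̃ₛ₋₁` otherwise.
-/

open Finset

section RecMin

variable {α : Type*} [CommMonoidWithZero α] [LinearOrder α]

theorem min_min_mul_le_mul_min_one [MulPosMono α] {x y c : α} (hxy : x ≤ y) (hc : 0 ≤ c) :
    min (min (x * c) x) c ≤ y * min c 1 := by
  rcases le_total c 1 with hc1 | hc1
  · rw [min_eq_left hc1]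
    calc min (min (x * c) x) c ≤ x * c := (min_le_left _ _).trans (min_le_left _ _)
      _ ≤ y * c := mul_le_mul_of_nonneg_right hxy hc
  · rw [min_eq_right hc1, mul_one]
    exact (min_le_left _ _).trans ((min_le_right _ _).trans hxy)

variable {p pt : ℕ → α}

theorem le_of_rec_min (h0 : pt 0 = p 0)
    (hrec : ∀ i, pt (i + 1) = min (min (pt i * p (i + 1)) (pt i)) (p (i + 1))) (i : ℕ) :
    pt i ≤ p i := by
  cases i with
  | zero => exact h0.le
  | succ i => exact hrec i ▸ min_le_right _ _

theorem le_mul_prod_Ioc_min_one_of_rec_min [MulPosMono α]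
    (hrec : ∀ i, pt (i + 1) = min (min (pt i * p (i + 1)) (pt i)) (p (i + 1)))
    {i n : ℕ} (hin : i ≤ n) (hp : ∀ s ∈ Ioc i n, 0 ≤ p s) (hi : pt i ≤ p i) :
    pt n ≤ p i * ∏ s ∈ Ioc i n, min (p s) 1 := by
  induction n, hin using Nat.le_induction with
  | base => simpa using hi
  | succ n hin ih =>
    have hp' : ∀ s ∈ Ioc i n, 0 ≤ p s := fun s hs =>
      hp s (Ioc_subset_Ioc_right n.le_succ hs)
    rw [prod_Ioc_succ_top hin, ← mul_assoc, hrec n]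
    exact min_min_mul_le_mul_min_one (ih hp')
      (hp (n + 1) (mem_Ioc.mpr ⟨Nat.lt_succ_of_le hin, le_rfl⟩))

end RecMin

/-- If `p̃₀ = p₀` and `p̃ᵢ = min{p̃_{i−1}·pᵢ, p̃_{i−1}, pᵢ}` for
`i = 1,…,L*`, with all `pᵢ > 0`, then
`p̃_{L*} ≤ min_{0≤i≤L*} pᵢ ∏_{s=i+1}^{L*} min(pₛ,1)`. -/
theorem statement14 (Lstar : ℕ) (p : ℕ → ℝ) (hp : ∀ i ≤ Lstar, 0 < p i)
    (pt : ℕ → ℝ) (h0 : pt 0 = p 0)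
    (hrec : ∀ i, pt (i + 1) = min (min (pt i * p (i + 1)) (pt i)) (p (i + 1))) :
    ∀ i ≤ Lstar, pt Lstar ≤ p i * ∏ s ∈ Finset.Ioc i Lstar, min (p s) 1 := fun i hi =>
  le_mul_prod_Ioc_min_one_of_rec_min hrec hi (fun s hs => (hp s (mem_Ioc.mp hs).2).le)
    (le_of_rec_min h0 hrec i)
end
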